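/- In BCB with public budgets (players must budget-bid their true budgets), consider three slots θ1 > θ2 > θ3 > 0 and four players with distinct budgets B1 > B2 > B3 > B4, with the twelve values p_i^j = B_i/θ_j pairwise distinct and satisfying p_4^1 < p_3^1 < p_2^1 < p_1^1 < p_4^2 < p_3^2 < p_2^2 < p_1^2 < p_4^3 < p_3^3 < p_2^3 < p_1^3, all valuations exceeding p_1^3, and ties resolved by budget order. Then no Nash equilibrium in value-bids exists. -/

import Mathlib

/-!
Only the ranking matters: after sorting, a unilateral deviation re-inserts one bidder, with a new
bid, into the ranking of the others, and removing an unassigned bidder from a ranking leaves the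
allocation of the others unchanged.

With four bidders and three slots some bidder `z` is unassigned and earns nothing. Had the others
left a slot free, `z` would take it from the bottom for free; and `z` cannot profitably enter just
above the bid `c j` of the `j`-th of the others, so `B_z ≤ θ_s c_j` for every slot `s` still open at
rank `j`. Through the chain of the `B_i / θ_j` this forces the others to take the slots `2, 1, 0`
in this order. Then either the top bidder gains by dropping just below the second one, who takes
slot `1` from the top and leaves him a slot at least as good at a lower price, or the holder of
slot `1` gains by dropping to the bottom, where slot `1` is still free and costs nothing.
-/

/-- The bid (or other attribute) of the player occupying rank `r` in the ordering `π`
(rank `0` is the highest bidder); `0` for out-of-range ranks. -/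
noncomputable def rankVal {n : ℕ} (f : Fin n → ℝ) (π : Equiv.Perm (Fin n)) (r : ℕ) : ℝ :=
  if h : r < n then f (π ⟨r, h⟩) else 0

/-- `π` lists the players in decreasing order of their bids `b`,
breaking ties according to the fixed priority order `prio` (lower `prio` = higher priority). -/
def IsBidOrder {n : ℕ} (b : Fin n → ℝ) (prio : Fin n → ℕ) (π : Equiv.Perm (Fin n)) : Prop :=
  ∀ r r' : Fin n, r < r' →
    b (π r) > b (π r') ∨ (b (π r) = b (π r') ∧ prio (π r) < prio (π r'))

/-- BCB: like BCP, but a player may only take a slot that he could afford were he to pay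
his *own* value-bid `rb r`. -/
noncomputable def bcbAvail {k : ℕ} (θ : Fin k → ℝ) (rb rg : ℕ → ℝ) : ℕ → Finset (Fin k)
  | 0 => Finset.univ
  | r + 1 =>
    let F := (bcbAvail θ rb rg r).filter fun s => θ s * rb r ≤ rg r
    if h : F.Nonempty then (bcbAvail θ rb rg r).erase (F.min' h) else bcbAvail θ rb rg r

/-- BCB: the slot assigned to the player of rank `r` (or `none`). -/
noncomputable def bcbSlot {k : ℕ} (θ : Fin k → ℝ) (rb rg : ℕ → ℝ) (r : ℕ) : Option (Fin k) :=
  let F := (bcbAvail θ rb rg r).filter fun s => θ s * rb r ≤ rg r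
  if h : F.Nonempty then some (F.min' h) else none

/-- Utility of player `i` under BCB. -/
noncomputable def bcbUtil {n k : ℕ} (θ : Fin k → ℝ) (v B b g : Fin n → ℝ)
    (π : Equiv.Perm (Fin n)) (i : Fin n) : EReal :=
  let r := (π.symm i : ℕ)
  let p := rankVal b π (r + 1)
  match bcbSlot θ (rankVal b π) (rankVal g π) r with
  | none => 0
  | some s => if θ s * p ≤ B i then ((θ s * (v i - p) : ℝ) : EReal) else ⊥

open Finset

section Allocation

variable {k : ℕ} {θ : Fin k → ℝ} {rb rg rb' rg' : ℕ → ℝ} {r r' : ℕ} {s : Fin k}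

theorem bcbAvail_zero : bcbAvail θ rb rg 0 = univ := rfl

theorem bcbSlot_eq_none_iff :
    bcbSlot θ rb rg r = none ↔ ∀ s ∈ bcbAvail θ rb rg r, rg r < θ s * rb r := by
  dsimp only [bcbSlot]
  split_ifs with h
  · obtain ⟨s, hs⟩ := h
    simp only [false_iff, not_forall, not_lt]
    exact ⟨s, (mem_filter.1 hs).1, (mem_filter.1 hs).2⟩
  · simpa [not_nonempty_iff_eq_empty, filter_eq_empty_iff] using h

theorem bcbSlot_eq_some_iff :
    bcbSlot θ rb rg r = some s ↔ s ∈ bcbAvail θ rb rg r ∧ θ s * rb r ≤ rg r ∧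
      ∀ t ∈ bcbAvail θ rb rg r, t < s → rg r < θ t * rb r := by
  dsimp only [bcbSlot]
  split_ifs with h
  · rw [Option.some.injEq, min'_eq_iff]
    simp only [mem_filter, and_imp]
    constructor
    · rintro ⟨⟨hs, hsa⟩, hmin⟩
      exact ⟨hs, hsa, fun t ht hts => lt_of_not_ge fun hta => (hmin t ht hta).not_gt hts⟩
    · rintro ⟨hs, hsa, hmin⟩
      exact ⟨⟨hs, hsa⟩, fun t ht hta => le_of_not_gt fun hts => (hmin t ht hts).not_ge hta⟩
  · simp only [false_iff, not_and, not_forall, not_lt]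
    exact fun hs hsa => absurd ⟨s, mem_filter.2 ⟨hs, hsa⟩⟩ h

theorem bcbAvail_succ_of_bcbSlot_eq_none (h : bcbSlot θ rb rg r = none) :
    bcbAvail θ rb rg (r + 1) = bcbAvail θ rb rg r := by
  unfold bcbSlot at h
  rw [bcbAvail]
  split_ifs with hne
  · rw [dif_pos hne] at h; cases h
  · rfl

theorem bcbAvail_succ_of_bcbSlot_eq_some (h : bcbSlot θ rb rg r = some s) :
    bcbAvail θ rb rg (r + 1) = (bcbAvail θ rb rg r).erase s := by
  unfold bcbSlot at h
  rw [bcbAvail]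
  split_ifs with hne
  · rw [dif_pos hne, Option.some.injEq] at h; rw [h]
  · rw [dif_neg hne] at h; cases h

theorem bcbSlot_congr (hA : bcbAvail θ rb rg r = bcbAvail θ rb' rg' r')
    (hb : rb r = rb' r') (hg : rg r = rg' r') : bcbSlot θ rb rg r = bcbSlot θ rb' rg' r' := by
  unfold bcbSlot; simp only [hA, hb, hg]

theorem bcbSlot_zero_congr (hb : rb 0 = rb' 0) (hg : rg 0 = rg' 0) :
    bcbSlot θ rb rg 0 = bcbSlot θ rb' rg' 0 :=
  bcbSlot_congr rfl hb hg

theorem bcbAvail_succ_congr (hA : bcbAvail θ rb rg r = bcbAvail θ rb' rg' r')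
    (hb : rb r = rb' r') (hg : rg r = rg' r') :
    bcbAvail θ rb rg (r + 1) = bcbAvail θ rb' rg' (r' + 1) := by
  simp only [bcbAvail, hA, hb, hg]

theorem bcbAvail_congr_of_lt (hb : ∀ m < r, rb m = rb' m) (hg : ∀ m < r, rg m = rg' m) :
    bcbAvail θ rb rg r = bcbAvail θ rb' rg' r := by
  induction r with
  | zero => rfl
  | succ r ih =>
    exact bcbAvail_succ_congr (ih (fun m hm => hb m (by omega)) fun m hm => hg m (by omega))
      (hb r r.lt_succ_self) (hg r r.lt_succ_self)

theorem bcbSlot_congr_of_le (hb : ∀ m ≤ r, rb m = rb' m) (hg : ∀ m ≤ r, rg m = rg' m) :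
    bcbSlot θ rb rg r = bcbSlot θ rb' rg' r :=
  bcbSlot_congr (bcbAvail_congr_of_lt (fun m hm => hb m hm.le) fun m hm => hg m hm.le)
    (hb r le_rfl) (hg r le_rfl)

theorem bcbAvail_succ_subset : bcbAvail θ rb rg (r + 1) ⊆ bcbAvail θ rb rg r := by
  cases h : bcbSlot θ rb rg r with
  | none => rw [bcbAvail_succ_of_bcbSlot_eq_none h]
  | some s => rw [bcbAvail_succ_of_bcbSlot_eq_some h]; exact erase_subset _ _

theorem card_bcbAvail_le_succ_add_one :
    #(bcbAvail θ rb rg r) ≤ #(bcbAvail θ rb rg (r + 1)) + 1 := by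
  cases h : bcbSlot θ rb rg r with
  | none => rw [bcbAvail_succ_of_bcbSlot_eq_none h]; omega
  | some s =>
    rw [bcbAvail_succ_of_bcbSlot_eq_some h]
    have := pred_card_le_card_erase (s := bcbAvail θ rb rg r) (a := s)
    omega

theorem card_bcbAvail_le_add (m : ℕ) :
    #(bcbAvail θ rb rg r) ≤ #(bcbAvail θ rb rg (r + m)) + m := by
  induction m with
  | zero => simp
  | succ m ih =>
    have := card_bcbAvail_le_succ_add_one (θ := θ) (rb := rb) (rg := rg) (r := r + m)
    rw [← add_assoc r]
    omega

theorem exists_bcbSlot_eq_none : ∃ r ≤ k, bcbSlot θ rb rg r = none := by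
  by_contra! h
  have hcard : ∀ m ≤ k, #(bcbAvail θ rb rg m) + m = k := by
    intro m hm
    induction m with
    | zero => simp [bcbAvail_zero]
    | succ m ih =>
      obtain ⟨s, hs⟩ := Option.ne_none_iff_exists'.1 (h m (by omega))
      rw [bcbAvail_succ_of_bcbSlot_eq_some hs,
        card_erase_of_mem (bcbSlot_eq_some_iff.1 hs).1]
      have := ih (by omega)
      have := card_pos.2 ⟨s, (bcbSlot_eq_some_iff.1 hs).1⟩
      omega
  have hempty : bcbAvail θ rb rg k = ∅ := card_eq_zero.1 (by have := hcard k le_rfl; omega)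
  exact h k le_rfl (bcbSlot_eq_none_iff.2 (by simp [hempty]))

theorem bcbSlot_ne_none_of_bcbAvail_eq_empty (h : bcbAvail θ rb rg k = ∅) (hr : r < k) :
    bcbSlot θ rb rg r ≠ none := by
  intro hnone
  have h0 := card_bcbAvail_le_add (θ := θ) (rb := rb) (rg := rg) (r := 0) r
  have h1 := card_bcbAvail_le_add (θ := θ) (rb := rb) (rg := rg) (r := r + 1) (k - r - 1)
  rw [bcbAvail_succ_of_bcbSlot_eq_none hnone, show r + 1 + (k - r - 1) = k by omega, h] at h1
  simp [bcbAvail_zero] at h0 h1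
  omega

end Allocation

section RankVal

variable {n : ℕ}

theorem rankVal_fin (f : Fin n → ℝ) (π : Equiv.Perm (Fin n)) (r : Fin n) :
    rankVal f π r = f (π r) := dif_pos r.2

theorem rankVal_one (f : Fin n → ℝ) (r : Fin n) : rankVal f 1 r = f r := rankVal_fin f 1 r

theorem rankVal_of_le (f : Fin n → ℝ) (π : Equiv.Perm (Fin n)) {r : ℕ} (h : n ≤ r) :
    rankVal f π r = 0 := dif_neg h.not_gt

theorem rankVal_eq_rankVal_comp (f : Fin n → ℝ) (π : Equiv.Perm (Fin n)) :
    rankVal f π = rankVal (f ∘ π) 1 := rfl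

theorem Fin.val_succAbove_eq_ite (p : Fin (n + 1)) (i : Fin n) :
    (p.succAbove i : ℕ) = if (i : ℕ) < p then (i : ℕ) else (i : ℕ) + 1 := by
  unfold Fin.succAbove
  split_ifs <;> simp_all [Fin.lt_def]

theorem rankVal_removeNth (ρ : Fin (n + 1)) (f : Fin (n + 1) → ℝ) (m : ℕ) :
    rankVal (ρ.removeNth f) 1 m = rankVal f 1 (if m < ρ then m else m + 1) := by
  by_cases hm : m < n
  · have := rankVal_fin f 1 (ρ.succAbove ⟨m, hm⟩)
    rw [Fin.val_succAbove_eq_ite] at this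
    exact (rankVal_fin _ 1 ⟨m, hm⟩).trans this.symm
  · rw [rankVal_of_le _ _ (not_lt.1 hm), rankVal_of_le]
    split_ifs <;> omega

theorem rankVal_insertNth_of_lt {j : Fin (n + 1)} {r : ℕ} (h : r < j) (x : ℝ)
    (c : Fin n → ℝ) :
    rankVal (j.insertNth x c : Fin (n + 1) → ℝ) 1 r = rankVal c 1 r := by
  have := rankVal_removeNth j (j.insertNth x c) r
  rwa [Fin.removeNth_insertNth, if_pos h, eq_comm] at this

theorem rankVal_insertNth_self (j : Fin (n + 1)) (x : ℝ) (c : Fin n → ℝ) :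
    rankVal (j.insertNth x c : Fin (n + 1) → ℝ) 1 j = x := by
  rw [rankVal_fin, Equiv.Perm.one_apply, Fin.insertNth_apply_same]

theorem rankVal_insertNth_of_le {j : Fin (n + 1)} {r : ℕ} (h : j ≤ r) (x : ℝ)
    (c : Fin n → ℝ) :
    rankVal (j.insertNth x c : Fin (n + 1) → ℝ) 1 (r + 1) = rankVal c 1 r := by
  have := rankVal_removeNth j (j.insertNth x c) r
  rwa [Fin.removeNth_insertNth, if_neg (not_lt.2 h), eq_comm] at this

theorem rankVal_snoc_of_lt {r : ℕ} (h : r < n) (x : ℝ) (c : Fin n → ℝ) :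
    rankVal (Fin.snoc c x : Fin (n + 1) → ℝ) 1 r = rankVal c 1 r := by
  rw [← Fin.insertNth_last']
  exact rankVal_insertNth_of_lt h x c

theorem Fin.removeNth_castSucc_snoc {α : Type*} (p : Fin (n + 1)) (f : Fin (n + 1) → α)
    (x : α) :
    (p.castSucc.removeNth (Fin.snoc f x : Fin (n + 2) → α) : Fin (n + 1) → α) =
      Fin.snoc (p.removeNth f) x := by
  funext i
  refine Fin.lastCases ?_ (fun j => ?_) i
  · simp [Fin.removeNth, Fin.succAbove_castSucc_of_le p (Fin.last n) (Fin.le_last p)]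
  · rw [Fin.snoc_castSucc, Fin.removeNth, Fin.removeNth, Fin.castSucc_succAbove_castSucc,
      Fin.snoc_castSucc]

end RankVal

section UnassignedRank

variable {k : ℕ} {θ : Fin k → ℝ}

theorem bcbAvail_skip_of_bcbSlot_eq_none {rb rg : ℕ → ℝ} {ρ : ℕ}
    (h : bcbSlot θ rb rg ρ = none) (m : ℕ) :
    bcbAvail θ rb rg (if m < ρ then m else m + 1) =
      bcbAvail θ (fun i => rb (if i < ρ then i else i + 1))
        (fun i => rg (if i < ρ then i else i + 1)) m := by
  induction m with
  | zero =>
    split_ifs with h0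
    · rfl
    · obtain rfl : ρ = 0 := by omega
      exact bcbAvail_succ_of_bcbSlot_eq_none h
  | succ m ih =>
    rw [← bcbAvail_succ_congr ih rfl rfl]
    split_ifs with h1 h2 h2
    · rfl
    · omega
    · obtain rfl : ρ = m + 1 := by omega
      exact bcbAvail_succ_of_bcbSlot_eq_none h
    · rfl

theorem bcbSlot_succAbove_of_bcbSlot_eq_none {n : ℕ} {β γ : Fin (n + 1) → ℝ}
    {ρ : Fin (n + 1)} (h : bcbSlot θ (rankVal β 1) (rankVal γ 1) ρ = none) (m : Fin n) :
    bcbSlot θ (rankVal β 1) (rankVal γ 1) (ρ.succAbove m) =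
      bcbSlot θ (rankVal (ρ.removeNth β) 1) (rankVal (ρ.removeNth γ) 1) m := by
  rw [funext (rankVal_removeNth ρ β), funext (rankVal_removeNth ρ γ), Fin.val_succAbove_eq_ite]
  exact bcbSlot_congr (bcbAvail_skip_of_bcbSlot_eq_none h m) rfl rfl

end UnassignedRank

section Ranking

variable {n k : ℕ}

noncomputable def rankUtil (θ : Fin k → ℝ) (β γ : Fin n → ℝ) (r : ℕ) (w : ℝ) : EReal :=
  match bcbSlot θ (rankVal β 1) (rankVal γ 1) r with
  | none => 0
  | some s =>
    if θ s * rankVal β 1 (r + 1) ≤ rankVal γ 1 r then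
      ((θ s * (w - rankVal β 1 (r + 1)) : ℝ) : EReal)
    else ⊥

variable {θ : Fin k → ℝ} {β γ : Fin n → ℝ} {r : ℕ} {w : ℝ} {s : Fin k}

theorem bcbUtil_apply_eq_rankUtil (v B b : Fin n → ℝ) (π : Equiv.Perm (Fin n)) (r : Fin n) :
    bcbUtil θ v B b B π (π r) = rankUtil θ (b ∘ π) (B ∘ π) r (v (π r)) := by
  simp only [bcbUtil, rankUtil, Equiv.symm_apply_apply, ← rankVal_eq_rankVal_comp,
    rankVal_fin B π r]

theorem rankUtil_of_bcbSlot_eq_none (h : bcbSlot θ (rankVal β 1) (rankVal γ 1) r = none) :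
    rankUtil θ β γ r w = 0 := by
  simp only [rankUtil, h]

theorem rankUtil_of_bcbSlot_eq_some (h : bcbSlot θ (rankVal β 1) (rankVal γ 1) r = some s)
    (hbudget : θ s * rankVal β 1 (r + 1) ≤ rankVal γ 1 r) :
    rankUtil θ β γ r w = ((θ s * (w - rankVal β 1 (r + 1)) : ℝ) : EReal) := by
  simp only [rankUtil, h, if_pos hbudget]

theorem rankUtil_of_bcbSlot_eq_some_of_le
    (h : bcbSlot θ (rankVal β 1) (rankVal γ 1) r = some s) (hθ : 0 ≤ θ s)
    (hp : rankVal β 1 (r + 1) ≤ rankVal β 1 r) :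
    rankUtil θ β γ r w = ((θ s * (w - rankVal β 1 (r + 1)) : ℝ) : EReal) :=
  rankUtil_of_bcbSlot_eq_some h
    ((mul_le_mul_of_nonneg_left hp hθ).trans (bcbSlot_eq_some_iff.1 h).2.1)

end Ranking

def IsNashEq {n k : ℕ} (θ : Fin k → ℝ) (v B : Fin n → ℝ) (prio : Fin n → ℕ) (b : Fin n → ℝ)
    (π : Equiv.Perm (Fin n)) : Prop :=
  IsBidOrder b prio π ∧ ∀ (i : Fin n) (b' : ℝ) (π' : Equiv.Perm (Fin n)),
    IsBidOrder (Function.update b i b') prio π' →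
    bcbUtil θ v B (Function.update b i b') B π' i ≤ bcbUtil θ v B b B π i

/-- Values, bids and budgets listed by rank. Only deviations to a bid that separates the deviator
strictly from the others are kept: for them the new ranking, and hence the outcome, is explicit. -/
def IsRankedEquilibrium {n k : ℕ} (θ : Fin k → ℝ) (w β γ : Fin (n + 1) → ℝ) : Prop :=
  Antitone β ∧ ∀ (ρ j : Fin (n + 1)) (x : ℝ),
    (∀ m : Fin n, (m : ℕ) < j → x < ρ.removeNth β m) →
    (∀ m : Fin n, (j : ℕ) ≤ m → ρ.removeNth β m < x) →
    rankUtil θ (j.insertNth x (ρ.removeNth β)) (j.insertNth (γ ρ) (ρ.removeNth γ)) j (w ρ) ≤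
      rankUtil θ β γ ρ (w ρ)

section Reranking

variable {n : ℕ} {b : Fin (n + 1) → ℝ} {prio : Fin (n + 1) → ℕ}
  {π : Equiv.Perm (Fin (n + 1))}

theorem Fin.succAbove_lt_iff_val_lt (p : Fin (n + 1)) (i : Fin n) :
    p.succAbove i < p ↔ (i : ℕ) < p :=
  (Fin.succAbove_lt_iff_castSucc_lt p i).trans Fin.lt_def

theorem IsBidOrder.exists_update (hord : IsBidOrder b prio π) (ρ j : Fin (n + 1)) (x : ℝ)
    (hhi : ∀ m : Fin n, (m : ℕ) < j → x < b (π (ρ.succAbove m)))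
    (hlo : ∀ m : Fin n, (j : ℕ) ≤ m → b (π (ρ.succAbove m)) < x) :
    ∃ π' : Equiv.Perm (Fin (n + 1)), IsBidOrder (Function.update b (π ρ) x) prio π' ∧
      π' j = π ρ ∧ ∀ m, π' (j.succAbove m) = π (ρ.succAbove m) := by
  set π' := (j.cycleRange.trans ρ.cycleRange.symm).trans π
  have hj : π' j = π ρ := by simp [π', Fin.cycleRange_self, Fin.cycleRange_symm_zero]
  have hm : ∀ m, π' (j.succAbove m) = π (ρ.succAbove m) := fun m => by
    simp [π', Fin.cycleRange_succAbove, Fin.cycleRange_symm_succ]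
  have hne : ∀ m, π (ρ.succAbove m) ≠ π ρ := fun m h => Fin.succAbove_ne ρ m (π.injective h)
  refine ⟨π', fun r r' hrr' => ?_, hj, hm⟩
  obtain hr | ⟨m, rfl⟩ := Fin.eq_self_or_eq_succAbove j r <;>
    obtain hr' | ⟨m', rfl⟩ := Fin.eq_self_or_eq_succAbove j r'
  · exact absurd (hr ▸ hr' ▸ hrr') (lt_irrefl _)
  · subst hr
    left
    rw [hj, hm, Function.update_self, Function.update_of_ne (hne m')]
    exact hlo m' (not_lt.1 fun h => ((Fin.succAbove_lt_iff_val_lt r m').2 h).not_gt hrr')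
  · subst hr'
    left
    rw [hj, hm, Function.update_self, Function.update_of_ne (hne m)]
    exact hhi m ((Fin.succAbove_lt_iff_val_lt r' m).1 hrr')
  · rw [hm, hm, Function.update_of_ne (hne m), Function.update_of_ne (hne m')]
    exact hord _ _ (Fin.succAbove_lt_succAbove_iff.2 (Fin.succAbove_lt_succAbove_iff.1 hrr'))

end Reranking

theorem IsNashEq.isRankedEquilibrium {n k : ℕ} {θ : Fin k → ℝ} {v B b : Fin (n + 1) → ℝ}
    {prio : Fin (n + 1) → ℕ} {π : Equiv.Perm (Fin (n + 1))} (h : IsNashEq θ v B prio b π) :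
    IsRankedEquilibrium θ (v ∘ π) (b ∘ π) (B ∘ π) := by
  refine ⟨fun r r' hle => ?_, fun ρ j x hhi hlo => ?_⟩
  · rcases hle.lt_or_eq with hlt | rfl
    · rcases h.1 r r' hlt with hgt | ⟨heq, -⟩
      exacts [hgt.le, heq.ge]
    · exact le_rfl
  obtain ⟨π', hord', hj, hm⟩ := h.1.exists_update ρ j x hhi hlo
  have hcomp : ∀ (f : Fin (n + 1) → ℝ) (y : ℝ),
      Function.update f (π ρ) y ∘ π' = j.insertNth y (ρ.removeNth (f ∘ π)) := by
    intro f y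
    funext r
    obtain rfl | ⟨m, rfl⟩ := Fin.eq_self_or_eq_succAbove j r
    · simp [hj]
    · simp [hm, Fin.removeNth]
  have hdev := bcbUtil_apply_eq_rankUtil (θ := θ) v B (Function.update b (π ρ) x) π' j
  rw [hj, hcomp, show B ∘ π' = Function.update B (π ρ) (B (π ρ)) ∘ π' by simp, hcomp] at hdev
  have horig := bcbUtil_apply_eq_rankUtil (θ := θ) v B b π ρ
  exact hdev ▸ horig ▸ h.2 (π ρ) x π' hord'

theorem exists_neg_lt {n : ℕ} (f : Fin n → ℝ) : ∃ x < 0, ∀ m, x < f m := by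
  have hS : ∀ m, |f m| ≤ ∑ i, |f i| := fun m =>
    single_le_sum (fun i _ => abs_nonneg (f i)) (mem_univ m)
  refine ⟨-(1 + ∑ m, |f m|), ?_, fun m => ?_⟩
  · linarith [sum_nonneg fun i (_ : i ∈ univ) => abs_nonneg (f i)]
  · linarith [neg_abs_le (f m), hS m]

section UnassignedBidder

variable {n k : ℕ} {θ : Fin k → ℝ} {w β γ : Fin (n + 1) → ℝ}

theorem IsRankedEquilibrium.le_of_insert_of_bcbSlot_eq_none
    (hE : IsRankedEquilibrium θ w β γ) (hθ : ∀ s, 0 < θ s) {ρ : Fin (n + 1)}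
    (hρ : bcbSlot θ (rankVal β 1) (rankVal γ 1) ρ = none)
    (hγ : 0 ≤ γ ρ) (j : Fin (n + 1)) (x : ℝ)
    (hhi : ∀ m : Fin n, (m : ℕ) < j → x < ρ.removeNth β m)
    (hlo : ∀ m : Fin n, (j : ℕ) ≤ m → ρ.removeNth β m < x)
    (hp : rankVal (ρ.removeNth β) 1 j ≤ max x 0) {s : Fin k}
    (hs : s ∈ bcbAvail θ (rankVal (ρ.removeNth β) 1) (rankVal (ρ.removeNth γ) 1) j)
    (hsx : θ s * x ≤ γ ρ) :
    w ρ ≤ rankVal (ρ.removeNth β) 1 j := by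
  set c := ρ.removeNth β
  set g := ρ.removeNth γ
  have hA : bcbAvail θ (rankVal (j.insertNth x c) 1) (rankVal (j.insertNth (γ ρ) g) 1) j =
      bcbAvail θ (rankVal c 1) (rankVal g 1) j :=
    bcbAvail_congr_of_lt (fun m hm => rankVal_insertNth_of_lt hm x c)
      fun m hm => rankVal_insertNth_of_lt hm _ g
  obtain ⟨s', hs'⟩ := Option.ne_none_iff_exists'.1 fun hnone =>
    (bcbSlot_eq_none_iff.1 hnone s (hA ▸ hs)).not_ge
      (by rwa [rankVal_insertNth_self, rankVal_insertNth_self])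
  have hs'x : θ s' * x ≤ γ ρ := by
    simpa only [rankVal_insertNth_self] using (bcbSlot_eq_some_iff.1 hs').2.1
  have hbudget : θ s' * rankVal (j.insertNth x c) 1 (j + 1) ≤
      rankVal (j.insertNth (γ ρ) g) 1 j := by
    rw [rankVal_insertNth_of_le le_rfl, rankVal_insertNth_self]
    calc θ s' * rankVal c 1 j ≤ θ s' * max x 0 := mul_le_mul_of_nonneg_left hp (hθ s').le
      _ = max (θ s' * x) 0 := by rw [mul_max_of_nonneg _ _ (hθ s').le, mul_zero]
      _ ≤ γ ρ := max_le hs'x hγ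
  have hdev := hE.2 ρ j x hhi hlo
  rw [rankUtil_of_bcbSlot_eq_some hs' hbudget, rankUtil_of_bcbSlot_eq_none hρ,
    ← EReal.coe_zero, EReal.coe_le_coe_iff, rankVal_insertNth_of_le le_rfl] at hdev
  by_contra! hlt
  exact hdev.not_gt (mul_pos (hθ s') (sub_pos.2 hlt))

/-- An unassigned bidder who moves to the bottom with a negative bid pays nothing, so the others
must exhaust the slots. -/
theorem IsRankedEquilibrium.bcbAvail_removeNth_eq_empty (hE : IsRankedEquilibrium θ w β γ)
    (hθ : ∀ s, 0 < θ s) {ρ : Fin (n + 1)} (hρ : bcbSlot θ (rankVal β 1) (rankVal γ 1) ρ = none)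
    (hγ : 0 ≤ γ ρ) (hw : 0 < w ρ) :
    bcbAvail θ (rankVal (ρ.removeNth β) 1) (rankVal (ρ.removeNth γ) 1) n = ∅ := by
  obtain ⟨x, hx0, hx⟩ := exists_neg_lt (ρ.removeNth β)
  refine eq_empty_of_forall_notMem fun s hs => hw.not_ge ?_
  have := hE.le_of_insert_of_bcbSlot_eq_none hθ hρ hγ (Fin.last n) x (fun m _ => hx m)
    (fun m hm => absurd m.2 (not_lt.2 hm)) (by simp [rankVal_of_le]) hs
    ((mul_neg_of_pos_of_neg (hθ s) hx0).le.trans hγ)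
  simpa [rankVal_of_le] using this

/-- Entering just above the `j`-th of the others, an unassigned bidder would pay that bid, which is
below his value; so he cannot afford any slot still open at rank `j`. -/
theorem IsRankedEquilibrium.lt_mul_of_bcbSlot_eq_none (hE : IsRankedEquilibrium θ w β γ)
    (hθ : ∀ s, 0 < θ s) {ρ : Fin (n + 1)} (hρ : bcbSlot θ (rankVal β 1) (rankVal γ 1) ρ = none)
    (hγ : 0 ≤ γ ρ) (hc : ∀ m, ρ.removeNth β m < w ρ) {j : Fin n} {x : ℝ}
    (hjx : ρ.removeNth β j < x) (hhi : ∀ m, m < j → x < ρ.removeNth β m) {s : Fin k}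
    (hs : s ∈ bcbAvail θ (rankVal (ρ.removeNth β) 1) (rankVal (ρ.removeNth γ) 1) j) :
    γ ρ < θ s * x := by
  by_contra! hsx
  have hanti : Antitone (ρ.removeNth β) := hE.1.comp_monotone (Fin.strictMono_succAbove ρ).monotone
  have hcj : rankVal (ρ.removeNth β) 1 (j.castSucc : ℕ) = ρ.removeNth β j := rankVal_fin _ 1 j
  exact (hc j).not_ge (hcj ▸ hE.le_of_insert_of_bcbSlot_eq_none hθ hρ hγ j.castSucc x
    (fun m hm => hhi m hm) (fun m hm => (hanti (Fin.le_def.2 hm)).trans_lt hjx)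
    (hcj ▸ hjx.le.trans (le_max_left x 0)) hs hsx)

/-- A tie `c i = c (i + 1)` is handled at rank `i`, where the slot is open as well. -/
theorem IsRankedEquilibrium.le_mul_of_bcbSlot_eq_none (hE : IsRankedEquilibrium θ w β γ)
    (hθ : ∀ s, 0 < θ s) {ρ : Fin (n + 1)} (hρ : bcbSlot θ (rankVal β 1) (rankVal γ 1) ρ = none)
    (hγ : 0 ≤ γ ρ) (hc : ∀ m, ρ.removeNth β m < w ρ) (j : Fin n) {s : Fin k}
    (hs : s ∈ bcbAvail θ (rankVal (ρ.removeNth β) 1) (rankVal (ρ.removeNth γ) 1) j) :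
    γ ρ ≤ θ s * ρ.removeNth β j := by
  set c := ρ.removeNth β
  have hanti : Antitone c := hE.1.comp_monotone (Fin.strictMono_succAbove ρ).monotone
  have enter : ∀ {j : Fin n} {s : Fin k} {x : ℝ},
      s ∈ bcbAvail θ (rankVal c 1) (rankVal (ρ.removeNth γ) 1) j → c j < x →
      x < γ ρ / θ s → (∀ m, m < j → x < c m) → False := fun hs hjx hxs hhi => by
    have := hE.lt_mul_of_bcbSlot_eq_none hθ hρ hγ hc hjx hhi hs
    linarith [(lt_div_iff₀ (hθ _)).1 hxs]
  suffices ∀ i (hi : i < n) {s : Fin k},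
      s ∈ bcbAvail θ (rankVal c 1) (rankVal (ρ.removeNth γ) 1) i → γ ρ ≤ θ s * c ⟨i, hi⟩ from
    this j j.2 hs
  intro i
  induction i with
  | zero =>
    intro hi s hs
    by_contra! hlt
    obtain ⟨x, hx, hxs⟩ := exists_between ((lt_div_iff₀ (hθ s)).2 (by rwa [mul_comm]))
    exact enter (j := ⟨0, hi⟩) hs hx hxs fun m hm => absurd (Fin.lt_def.1 hm) (Nat.not_lt_zero _)
  | succ i ih =>
    intro hi s hs
    by_contra! hlt
    rcases (hanti (show (⟨i, by omega⟩ : Fin n) ≤ ⟨i + 1, hi⟩ from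
      Fin.le_def.2 (by simp))).lt_or_eq with hdrop | heq
    · obtain ⟨x, hx, hxs⟩ :=
        exists_between (lt_min ((lt_div_iff₀ (hθ s)).2 (by rwa [mul_comm])) hdrop)
      refine enter (j := ⟨i + 1, hi⟩) hs hx (hxs.trans_le (min_le_left _ _)) fun m hm => ?_
      exact (hxs.trans_le (min_le_right _ _)).trans_le
        (hanti (Fin.le_def.2 (by simp [Fin.lt_def] at hm; omega)))
    · exact hlt.not_ge (heq ▸ ih (by omega) (bcbAvail_succ_subset hs))

end UnassignedBidder

section AssignedBidders

variable {n k : ℕ} {θ : Fin k → ℝ}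

/-- The top bidder cannot afford a better slot at the second bid: otherwise he would raise his
bid just enough to take it at the same price. -/
theorem IsRankedEquilibrium.le_mul_of_bcbSlot_zero_eq_some {w β γ : Fin (n + 2) → ℝ}
    (hE : IsRankedEquilibrium θ w β γ) (hθ : ∀ s, 0 < θ s) (hθa : StrictAnti θ) {s t : Fin k}
    (h0 : bcbSlot θ (rankVal β 1) (rankVal γ 1) 0 = some s) (hts : t < s) (hw : β 1 < w 0) :
    γ 0 ≤ θ t * β 1 := by
  by_contra! hlt
  have hdiv : β 1 < γ 0 / θ t := (lt_div_iff₀ (hθ t)).2 (by rwa [mul_comm])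
  obtain ⟨x, hx1, hxt⟩ := exists_between hdiv
  replace hxt : θ t * x ≤ γ 0 := by rw [mul_comm]; exact ((lt_div_iff₀ (hθ t)).1 hxt).le
  have hdev := hE.2 0 0 x (fun m hm => absurd hm (Nat.not_lt_zero _))
    fun m _ => (hE.1 (Fin.le_def.2 (by simp) : (1 : Fin (n + 2)) ≤ m.succ)).trans_lt hx1
  set β' : Fin (n + 2) → ℝ := (0 : Fin (n + 2)).insertNth x ((0 : Fin (n + 2)).removeNth β)
  set γ' : Fin (n + 2) → ℝ := (0 : Fin (n + 2)).insertNth (γ 0) ((0 : Fin (n + 2)).removeNth γ)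
  have hx : rankVal β' 1 0 = x := rankVal_insertNth_self 0 x _
  have hγ0 : rankVal γ' 1 0 = γ 0 := rankVal_insertNth_self 0 _ _
  have hprice : rankVal β' 1 1 = β 1 :=
    (rankVal_insertNth_of_le le_rfl x _).trans (rankVal_fin _ 1 0)
  obtain ⟨s', hs'⟩ : ∃ s', bcbSlot θ (rankVal β' 1) (rankVal γ' 1) 0 = some s' :=
    Option.ne_none_iff_exists'.1 fun hnone =>
      (bcbSlot_eq_none_iff.1 hnone t (mem_univ t)).not_ge (by rwa [hx, hγ0])
  obtain ⟨-, hs'x, hmin⟩ := bcbSlot_eq_some_iff.1 hs'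
  rw [hx, hγ0] at hs'x hmin
  change rankUtil θ β' γ' 0 (w 0) ≤ rankUtil θ β γ 0 (w 0) at hdev
  have hs't : θ t ≤ θ s' := hθa.antitone (not_lt.1 fun h => (hmin t (mem_univ t) h).not_ge hxt)
  rw [rankUtil_of_bcbSlot_eq_some hs' (by rw [hprice, hγ0]; exact
      (mul_le_mul_of_nonneg_left hx1.le (hθ s').le).trans hs'x),
    rankUtil_of_bcbSlot_eq_some_of_le h0 (hθ s).le (hE.1 (Fin.zero_le 1)), hprice,
    EReal.coe_le_coe_iff, show rankVal β 1 (0 + 1) = β 1 from rankVal_fin β 1 1] at hdev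
  linarith [mul_lt_mul_of_pos_right ((hθa hts).trans_le hs't) (sub_pos.2 hw)]

/-- Otherwise the top bidder would drop just below the second bid: the second bidder, now on top,
takes `t`, which leaves `s` or better to him at the lower third bid. -/
theorem IsRankedEquilibrium.eq_of_bcbSlot_removeNth_zero_eq_some {w β γ : Fin (n + 3) → ℝ}
    (hE : IsRankedEquilibrium θ w β γ) (hθ : ∀ s, 0 < θ s) (hθa : Antitone θ) {s t : Fin k}
    (h0 : bcbSlot θ (rankVal β 1) (rankVal γ 1) 0 = some s) (h21 : β 2 < β 1) (hw : β 1 < w 0)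
    (ht : bcbSlot θ (rankVal ((0 : Fin (n + 3)).removeNth β) 1)
      (rankVal ((0 : Fin (n + 3)).removeNth γ) 1) 0 = some t) :
    t = s := by
  by_contra hts
  obtain ⟨x, hx2, hx1⟩ := exists_between h21
  have hdev := hE.2 0 1 x (fun m hm => by
      obtain rfl : m = 0 := Fin.ext (by simpa using hm)
      exact hx1)
    fun m hm => (hE.1 (Fin.le_def.2 (show 2 ≤ (m : ℕ) + 1 from
      Nat.succ_le_succ hm))).trans_lt hx2
  set β' : Fin (n + 3) → ℝ := (1 : Fin (n + 3)).insertNth x ((0 : Fin (n + 3)).removeNth β)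
  set γ' : Fin (n + 3) → ℝ := (1 : Fin (n + 3)).insertNth (γ 0) ((0 : Fin (n + 3)).removeNth γ)
  have hx : rankVal β' 1 1 = x := rankVal_insertNth_self 1 x _
  have hγ0 : rankVal γ' 1 1 = γ 0 := rankVal_insertNth_self 1 _ _
  have hprice : rankVal β' 1 2 = β 2 :=
    (rankVal_insertNth_of_le (j := 1) (r := 1) le_rfl x _).trans (rankVal_fin _ 1 1)
  have ht' : bcbSlot θ (rankVal β' 1) (rankVal γ' 1) 0 = some t := by
    rw [← ht]
    exact bcbSlot_congr_of_le (fun m hm => rankVal_insertNth_of_lt (by simp; omega) _ _)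
      fun m hm => rankVal_insertNth_of_lt (by simp; omega) _ _
  have hA : s ∈ bcbAvail θ (rankVal β' 1) (rankVal γ' 1) 1 := by
    rw [bcbAvail_succ_of_bcbSlot_eq_some ht', bcbAvail_zero]
    exact mem_erase.2 ⟨Ne.symm hts, mem_univ s⟩
  have hsx : θ s * x ≤ γ 0 :=
    (mul_le_mul_of_nonneg_left (hx1.trans_le (hE.1 (Fin.zero_le 1))).le (hθ s).le).trans
      (bcbSlot_eq_some_iff.1 h0).2.1
  obtain ⟨s', hs'⟩ : ∃ s', bcbSlot θ (rankVal β' 1) (rankVal γ' 1) 1 = some s' :=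
    Option.ne_none_iff_exists'.1 fun hnone =>
      (bcbSlot_eq_none_iff.1 hnone s hA).not_ge (by rwa [hx, hγ0])
  obtain ⟨-, hs'x, hmin⟩ := bcbSlot_eq_some_iff.1 hs'
  rw [hx, hγ0] at hs'x hmin
  change rankUtil θ β' γ' 1 (w 0) ≤ rankUtil θ β γ 0 (w 0) at hdev
  have hss' : θ s ≤ θ s' := hθa (not_lt.1 fun h => (hmin s hA h).not_ge hsx)
  rw [rankUtil_of_bcbSlot_eq_some hs' (by rw [hprice, hγ0]; exact
      (mul_le_mul_of_nonneg_left hx2.le (hθ s').le).trans hs'x),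
    rankUtil_of_bcbSlot_eq_some_of_le h0 (hθ s).le (hE.1 (Fin.zero_le 1)), hprice,
    EReal.coe_le_coe_iff, show rankVal β 1 (0 + 1) = β 1 from rankVal_fin β 1 1] at hdev
  linarith [mul_le_mul_of_nonneg_right hss' (by linarith : 0 ≤ w 0 - β 2),
    mul_lt_mul_of_pos_left (by linarith : w 0 - β 1 < w 0 - β 2) (hθ s)]

/-- A bidder who pays a positive price would, at the bottom, pay nothing; so the slot he would
get there is strictly worse. -/
theorem IsRankedEquilibrium.lt_of_bcbSlot_snoc {w β γ : Fin (n + 1) → ℝ}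
    (hE : IsRankedEquilibrium θ w β γ) (hθ : ∀ s, 0 < θ s) {r : Fin (n + 1)} {s t : Fin k}
    (hr : bcbSlot θ (rankVal β 1) (rankVal γ 1) r = some s) (hp : 0 < rankVal β 1 (r + 1))
    (hw : 0 ≤ w r) (hγ : 0 ≤ γ r) {x : ℝ} (hx : ∀ m, x < r.removeNth β m)
    (ht : bcbSlot θ (rankVal (Fin.snoc (r.removeNth β) x : Fin (n + 1) → ℝ) 1)
      (rankVal (Fin.snoc (r.removeNth γ) (γ r) : Fin (n + 1) → ℝ) 1) n = some t) :
    θ t < θ s := by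
  by_contra! hst
  have hdev := hE.2 r (Fin.last n) x (fun m _ => hx m) fun m hm => absurd m.2 (not_lt.2 hm)
  simp only [Fin.insertNth_last'] at hdev
  have hr1 : (r : ℕ) + 1 < n + 1 := by
    by_contra h
    exact hp.ne' (rankVal_of_le _ _ (not_lt.1 h))
  have hle : rankVal β 1 (r + 1) ≤ rankVal β 1 r := by
    rw [rankVal_fin β 1 r, rankVal_fin β 1 ⟨r + 1, hr1⟩]
    exact hE.1 (Fin.le_def.2 (Nat.le_succ _))
  have hbudget : θ t * rankVal (Fin.snoc (r.removeNth β) x : Fin (n + 1) → ℝ) 1 (n + 1) ≤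
      rankVal (Fin.snoc (r.removeNth γ) (γ r) : Fin (n + 1) → ℝ) 1 n := by
    rw [rankVal_of_le _ _ le_rfl, mul_zero]
    exact (rankVal_fin _ 1 (Fin.last n)).trans (Fin.snoc_last (α := fun _ => ℝ) _ _) ▸ hγ
  change rankUtil θ _ _ n (w r) ≤ _ at hdev
  rw [rankUtil_of_bcbSlot_eq_some ht hbudget,
    rankUtil_of_bcbSlot_eq_some_of_le hr (hθ s).le hle, rankVal_of_le _ _ le_rfl,
    EReal.coe_le_coe_iff] at hdev
  linarith [mul_lt_mul_of_pos_left hp (hθ s), mul_le_mul_of_nonneg_right hst hw]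

end AssignedBidders

section ThreeSlots

variable {θ : Fin 3 → ℝ}

theorem bcbSlot_two_eq_one {a e : Fin 3 → ℝ}
    (h0 : bcbSlot θ (rankVal a 1) (rankVal e 1) 0 = some 2) (h1 : θ 0 * a 1 ≤ e 1)
    (h2 : θ 1 * a 2 ≤ e 2) : bcbSlot θ (rankVal a 1) (rankVal e 1) 2 = some 1 := by
  have hA1 := bcbAvail_succ_of_bcbSlot_eq_some h0
  have hs1 : bcbSlot θ (rankVal a 1) (rankVal e 1) 1 = some 0 :=
    bcbSlot_eq_some_iff.2
      ⟨by rw [hA1, bcbAvail_zero]; decide, h1, fun t _ ht => absurd ht (Fin.not_lt_zero t)⟩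
  have hA2 := bcbAvail_succ_of_bcbSlot_eq_some hs1
  rw [hA1, bcbAvail_zero] at hA2
  refine bcbSlot_eq_some_iff.2 ⟨by rw [hA2]; decide, h2, fun t ht htl => ?_⟩
  rw [hA2] at ht
  fin_cases t <;> simp_all

variable {lo hi : ℝ}

theorem lt_of_bcbSlot_ne_none (hθ : StrictAnti θ) (hθpos : ∀ j, 0 < θ j) {c g : Fin 3 → ℝ}
    (hg : ∀ m, g m ≤ hi) {v : ℝ} (hv0 : 0 < v) (hv : hi < v * θ 2) {m : Fin 3}
    (h : bcbSlot θ (rankVal c 1) (rankVal g 1) m ≠ none) : c m < v := by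
  obtain ⟨s, hs⟩ := Option.ne_none_iff_exists'.1 h
  have haff : θ s * c m ≤ g m := by
    simpa only [rankVal_one] using (bcbSlot_eq_some_iff.1 hs).2.1
  by_contra! hvc
  have h2s : θ 2 ≤ θ s := hθ.antitone (by omega)
  linarith [hg m, mul_le_mul_of_nonneg_right h2s (hv0.le.trans hvc),
    mul_le_mul_of_nonneg_right hvc (hθpos 2).le]

/-- The bounds `lo ≤ θ s * c j` from `hD` and the gaps `h01`, `h12` price the bidder of rank `j`
out of every slot better than `2 - j`. -/
theorem bcbSlot_eq_two_one_zero (hθ : StrictAnti θ) (hθpos : ∀ j, 0 < θ j) (hlo : 0 < lo)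
    (h01 : hi * θ 1 < lo * θ 0) (h12 : hi * θ 2 < lo * θ 1) {c g : Fin 3 → ℝ} (hc : Antitone c)
    (hg : ∀ m, g m ≤ hi) {Bz : ℝ} (hBz : lo ≤ Bz)
    (hfull : ∀ r < 3, bcbSlot θ (rankVal c 1) (rankVal g 1) r ≠ none)
    (hD : ∀ (j : Fin 3), ∀ s ∈ bcbAvail θ (rankVal c 1) (rankVal g 1) j, Bz ≤ θ s * c j) :
    bcbSlot θ (rankVal c 1) (rankVal g 1) 0 = some 2 ∧
      bcbSlot θ (rankVal c 1) (rankVal g 1) 1 = some 1 ∧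
      bcbSlot θ (rankVal c 1) (rankVal g 1) 2 = some 0 := by
  obtain ⟨σ0, h0⟩ := Option.ne_none_iff_exists'.1 (hfull 0 (by norm_num))
  obtain ⟨σ1, h1⟩ := Option.ne_none_iff_exists'.1 (hfull 1 (by norm_num))
  obtain ⟨σ2, h2⟩ := Option.ne_none_iff_exists'.1 (hfull 2 (by norm_num))
  have hθ01 := hθ (show (0 : Fin 3) < 1 by decide)
  have hθ12 := hθ (show (1 : Fin 3) < 2 by decide)
  have hσ0 : σ0 = 2 := by
    obtain ⟨-, haff, -⟩ := bcbSlot_eq_some_iff.1 h0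
    have hD0 := hD 0 2 (mem_univ 2)
    have hc0 : 0 < c 0 := pos_of_mul_pos_right (hlo.trans_le (hBz.trans hD0)) (hθpos 2).le
    by_contra hne
    have e1 : θ 1 * c 0 ≤ hi :=
      (mul_le_mul_of_nonneg_right (hθ.antitone (by omega)) hc0.le).trans (haff.trans (hg 0))
    nlinarith [mul_le_mul_of_nonneg_left e1 (hθpos 2).le,
      mul_le_mul_of_nonneg_right (hBz.trans hD0) (hθpos 1).le]
  subst hσ0
  have hA1 := bcbAvail_succ_of_bcbSlot_eq_some h0
  rw [bcbAvail_zero] at hA1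
  have hσ1 : σ1 = 1 := by
    obtain ⟨hmem, haff, -⟩ := bcbSlot_eq_some_iff.1 h1
    rw [hA1] at hmem
    have hA2 := bcbAvail_succ_of_bcbSlot_eq_some h1
    rw [hA1] at hA2
    obtain rfl | rfl | rfl : σ1 = 0 ∨ σ1 = 1 ∨ σ1 = 2 := by omega
    · have hD2 := hD 2 1 (by rw [show ((2 : Fin 3) : ℕ) = 1 + 1 from rfl, hA2]; decide)
      have e1 : θ 1 * c 2 ≤ θ 1 * c 1 :=
        mul_le_mul_of_nonneg_left (hc (show (1 : Fin 3) ≤ 2 by decide)) (hθpos 1).le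
      have e2 : θ 0 * c 1 ≤ hi := haff.trans (hg 1)
      nlinarith [mul_le_mul_of_nonneg_left e2 (hθpos 1).le,
        mul_le_mul_of_nonneg_right ((hBz.trans hD2).trans e1) (hθpos 0).le]
    · rfl
    · simp at hmem
  subst hσ1
  refine ⟨h0, h1, ?_⟩
  obtain ⟨hmem, -, -⟩ := bcbSlot_eq_some_iff.1 h2
  rw [bcbAvail_succ_of_bcbSlot_eq_some h1, hA1] at hmem
  obtain rfl | rfl | rfl : σ2 = 0 ∨ σ2 = 1 ∨ σ2 = 2 := by omega
  · exact h2
  all_goals simp at hmem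

end ThreeSlots

section FourBidders

variable {θ : Fin 3 → ℝ} {lo hi : ℝ} {w β γ : Fin 4 → ℝ}

/-- A bidder holding slot `1` at a positive price would keep that slot for free at the bottom, when
the others, ranked as before, leave it free: `ρ'` among them takes nothing and the other two take
slots `2` and `0`. -/
theorem IsRankedEquilibrium.bcbSlot_ne_some_one
    (hE : IsRankedEquilibrium θ w β γ) (hθpos : ∀ j, 0 < θ j) {r : Fin 4}
    (hp : 0 < rankVal β 1 (r + 1)) (hw : 0 ≤ w r) (hγ : 0 ≤ γ r) {ρ' : Fin 3}
    (hz : bcbSlot θ (rankVal (r.removeNth β) 1) (rankVal (r.removeNth γ) 1) ρ' = none)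
    (h0 : bcbSlot θ (rankVal (ρ'.removeNth (r.removeNth β)) 1)
      (rankVal (ρ'.removeNth (r.removeNth γ)) 1) 0 = some 2)
    (h1 : θ 0 * ρ'.removeNth (r.removeNth β) 1 ≤ ρ'.removeNth (r.removeNth γ) 1) :
    bcbSlot θ (rankVal β 1) (rankVal γ 1) r ≠ some 1 := by
  intro hr
  obtain ⟨x, hx0, hx⟩ := exists_neg_lt (r.removeNth β)
  set d := r.removeNth β
  set e := r.removeNth γ
  have hz' : bcbSlot θ (rankVal (Fin.snoc d x : Fin 4 → ℝ) 1) (rankVal (Fin.snoc e (γ r)) 1)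
      ρ'.castSucc = none :=
    (bcbSlot_congr_of_le
      (fun m hm => rankVal_snoc_of_lt (by rw [Fin.val_castSucc] at hm; omega) x d)
      fun m hm => rankVal_snoc_of_lt (by rw [Fin.val_castSucc] at hm; omega) _ e).trans hz
  have h3 := bcbSlot_succAbove_of_bcbSlot_eq_none hz' 2
  rw [Fin.succAbove_castSucc_of_le ρ' 2 (Fin.le_last ρ'), Fin.removeNth_castSucc_snoc,
    Fin.removeNth_castSucc_snoc] at h3
  change bcbSlot θ _ _ 3 = bcbSlot θ _ _ 2 at h3
  have h2 : bcbSlot θ (rankVal (Fin.snoc (ρ'.removeNth d) x : Fin 3 → ℝ) 1)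
      (rankVal (Fin.snoc (ρ'.removeNth e) (γ r) : Fin 3 → ℝ) 1) 2 = some 1 :=
    bcbSlot_two_eq_one
      ((bcbSlot_congr_of_le (fun m hm => rankVal_snoc_of_lt (by omega) x _)
        fun m hm => rankVal_snoc_of_lt (by omega) _ _).trans h0)
      (by rw [show (1 : Fin 3) = Fin.castSucc 1 from rfl, Fin.snoc_castSucc, Fin.snoc_castSucc]
          exact h1)
      (by rw [show (2 : Fin 3) = Fin.last 2 from rfl, Fin.snoc_last, Fin.snoc_last]
          exact (mul_neg_of_pos_of_neg (hθpos 1) hx0).le.trans hγ)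
  exact lt_irrefl _ (hE.lt_of_bcbSlot_snoc hθpos hr hp hw hγ hx (h3.trans h2))

/-- The second bidder would take slot `1` from the top, so the top bidder, holding slot `2`,
would gain by dropping below him. -/
theorem IsRankedEquilibrium.bcbSlot_zero_ne_two (hE : IsRankedEquilibrium θ w β γ)
    (hθ : StrictAnti θ) (hθpos : ∀ j, 0 < θ j) (h21 : β 2 < β 1) (hw : β 1 < w 0)
    (haff : θ 1 * β 1 ≤ γ 1) (hn : γ 1 < θ 0 * β 1) :
    bcbSlot θ (rankVal β 1) (rankVal γ 1) 0 ≠ some 2 := by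
  intro h0
  have ht : bcbSlot θ (rankVal ((0 : Fin 4).removeNth β) 1)
      (rankVal ((0 : Fin 4).removeNth γ) 1) 0 = some 1 := by
    refine bcbSlot_eq_some_iff.2 ⟨mem_univ 1, haff, fun t _ ht => ?_⟩
    obtain rfl : t = 0 := by omega
    exact hn
  exact absurd (hE.eq_of_bcbSlot_removeNth_zero_eq_some hθpos hθ.antitone h0 h21 hw ht) (by decide)

theorem IsRankedEquilibrium.bcbSlot_removeNth_of_bcbSlot_eq_none (hE : IsRankedEquilibrium θ w β γ)
    (hθ : StrictAnti θ) (hθpos : ∀ j, 0 < θ j) (hlo : 0 < lo) (h01 : hi * θ 1 < lo * θ 0)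
    (h12 : hi * θ 2 < lo * θ 1) (hγlo : ∀ r, lo ≤ γ r) (hγhi : ∀ r, γ r ≤ hi)
    (hw : ∀ r, hi < w r * θ 2) {ρ : Fin 4}
    (hρ : bcbSlot θ (rankVal β 1) (rankVal γ 1) ρ = none) :
    (∀ m i, ρ.removeNth β m < w i) ∧
      bcbSlot θ (rankVal (ρ.removeNth β) 1) (rankVal (ρ.removeNth γ) 1) 0 = some 2 ∧
      bcbSlot θ (rankVal (ρ.removeNth β) 1) (rankVal (ρ.removeNth γ) 1) 1 = some 1 ∧
      bcbSlot θ (rankVal (ρ.removeNth β) 1) (rankVal (ρ.removeNth γ) 1) 2 = some 0 ∧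
      γ ρ ≤ θ 2 * ρ.removeNth β 0 ∧ γ ρ ≤ θ 1 * ρ.removeNth β 1 ∧
      γ ρ ≤ θ 0 * ρ.removeNth β 2 := by
  have hγpos : ∀ r, 0 < γ r := fun r => hlo.trans_le (hγlo r)
  have hwpos : ∀ r, 0 < w r := fun r =>
    pos_of_mul_pos_left ((hγpos 0).trans_le (hγhi 0) |>.trans (hw r)) (hθpos 2).le
  have hfull : ∀ m < 3,
      bcbSlot θ (rankVal (ρ.removeNth β) 1) (rankVal (ρ.removeNth γ) 1) m ≠ none := fun m hm =>
    bcbSlot_ne_none_of_bcbAvail_eq_empty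
      (hE.bcbAvail_removeNth_eq_empty hθpos hρ (hγpos ρ).le (hwpos ρ)) hm
  have hcw : ∀ m i, ρ.removeNth β m < w i := fun m i =>
    lt_of_bcbSlot_ne_none hθ hθpos (fun _ => hγhi _) (hwpos i) (hw i) (hfull m m.2)
  have hD := hE.le_mul_of_bcbSlot_eq_none hθpos hρ (hγpos ρ).le fun m => hcw m ρ
  obtain ⟨h0, h1, h2⟩ := bcbSlot_eq_two_one_zero (c := ρ.removeNth β) (g := ρ.removeNth γ) hθ
    hθpos hlo h01 h12 (hE.1.comp_monotone (Fin.strictMono_succAbove ρ).monotone)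
    (fun _ => hγhi _) (hγlo ρ) hfull hD
  have hA1 := bcbAvail_succ_of_bcbSlot_eq_some h0
  have hA2 := bcbAvail_succ_of_bcbSlot_eq_some h1
  rw [bcbAvail_zero] at hA1
  rw [hA1] at hA2
  exact ⟨hcw, h0, h1, h2, hD 0 (mem_univ 2),
    hD 1 (by rw [show ((1 : Fin 3) : ℕ) = 0 + 1 from rfl, hA1]; decide),
    hD 2 (by rw [show ((2 : Fin 3) : ℕ) = 1 + 1 from rfl, hA2]; decide)⟩

/-- With the unassigned bidder third, the top bidder drops below the second one unless the second
and third bids tie; then the unassigned bidder could afford neither slot `0` nor slot `1` right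
after the top bidder, and the second bidder drops to the bottom. -/
theorem IsRankedEquilibrium.bcbSlot_two_ne_none (hE : IsRankedEquilibrium θ w β γ)
    (hθ : StrictAnti θ) (hθpos : ∀ j, 0 < θ j) (hγpos : ∀ r, 0 < γ r) (hwpos : ∀ r, 0 < w r)
    (hγ : Function.Injective γ) (hw : β 1 < w 0)
    (h0 : bcbSlot θ (rankVal ((2 : Fin 4).removeNth β) 1)
      (rankVal ((2 : Fin 4).removeNth γ) 1) 0 = some 2)
    (h1 : bcbSlot θ (rankVal ((2 : Fin 4).removeNth β) 1)
      (rankVal ((2 : Fin 4).removeNth γ) 1) 1 = some 1)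
    (h2 : bcbSlot θ (rankVal ((2 : Fin 4).removeNth β) 1)
      (rankVal ((2 : Fin 4).removeNth γ) 1) 2 = some 0)
    (D0 : γ 2 ≤ θ 2 * β 0) (D1 : γ 2 ≤ θ 1 * β 1) :
    bcbSlot θ (rankVal β 1) (rankVal γ 1) 2 ≠ none := by
  intro hρ
  have hQ := bcbSlot_succAbove_of_bcbSlot_eq_none (ρ := (2 : Fin 4)) hρ
  have hA1 := bcbAvail_succ_of_bcbSlot_eq_some h0
  have hA2 := bcbAvail_succ_of_bcbSlot_eq_some h1
  rw [bcbAvail_zero] at hA1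
  rw [hA1] at hA2
  have aff0 : θ 2 * β 0 ≤ γ 0 := (bcbSlot_eq_some_iff.1 h0).2.1
  have aff1 : θ 1 * β 1 ≤ γ 1 := (bcbSlot_eq_some_iff.1 h1).2.1
  have aff2 : θ 0 * β 3 ≤ γ 3 := (bcbSlot_eq_some_iff.1 h2).2.1
  have n10 : γ 1 < θ 0 * β 1 :=
    (bcbSlot_eq_some_iff.1 h1).2.2 0 (by rw [hA1]; decide) (by decide)
  have h0β : bcbSlot θ (rankVal β 1) (rankVal γ 1) 0 = some 2 := (hQ 0).trans h0
  have hA := hE.le_mul_of_bcbSlot_zero_eq_some hθpos hθ h0β (by decide : (1 : Fin 3) < 2) hw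
  rcases (hE.1 (show (1 : Fin 4) ≤ 2 by decide)).lt_or_eq with h21 | h21
  · exact hE.bcbSlot_zero_ne_two hθ hθpos h21 hw aff1 n10 h0β
  have hz0 : γ 2 < θ 0 * β 2 := by
    refine bcbSlot_eq_none_iff.1 hρ 0 ?_
    rw [bcbAvail_congr_of_lt (rb' := rankVal ((2 : Fin 4).removeNth β) 1)
      (rg' := rankVal ((2 : Fin 4).removeNth γ) 1)
      (fun m hm => by rcases (show m = 0 ∨ m = 1 by omega) with rfl | rfl <;> rfl)
      fun m hm => by rcases (show m = 0 ∨ m = 1 by omega) with rfl | rfl <;> rfl]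
    exact hA2 ▸ by decide
  have h0' : bcbSlot θ (rankVal ((1 : Fin 4).removeNth β) 1)
      (rankVal ((1 : Fin 4).removeNth γ) 1) 0 = some 2 := (bcbSlot_zero_congr rfl rfl).trans h0
  have hz : bcbSlot θ (rankVal ((1 : Fin 4).removeNth β) 1) (rankVal ((1 : Fin 4).removeNth γ) 1)
      1 = none := by
    refine bcbSlot_eq_none_iff.2 fun s hs => ?_
    rw [bcbAvail_succ_of_bcbSlot_eq_some h0', bcbAvail_zero] at hs
    obtain rfl | rfl : s = 0 ∨ s = 1 := by simp at hs; omega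
    · exact hz0
    · show γ 2 < θ 1 * β 2
      have hzg0 : γ 2 < γ 0 := (D0.trans aff0).lt_of_ne (hγ.ne (by decide))
      exact h21 ▸ hzg0.trans_le hA
  have hp : 0 < β 2 := h21 ▸ pos_of_mul_pos_right ((hγpos 2).trans_le D1) (hθpos 1).le
  exact hE.bcbSlot_ne_some_one hθpos (r := 1) hp (hwpos 1).le (hγpos 1).le (ρ' := 1) hz
    ((bcbSlot_zero_congr rfl rfl).trans h0) aff2 ((hQ 1).trans h1)

theorem not_isRankedEquilibrium (hθ : StrictAnti θ) (hθpos : ∀ j, 0 < θ j)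
    (hlo : 0 < lo) (h01 : hi * θ 1 < lo * θ 0) (h12 : hi * θ 2 < lo * θ 1)
    (hγlo : ∀ r, lo ≤ γ r) (hγhi : ∀ r, γ r ≤ hi) (hγ : Function.Injective γ)
    (hw : ∀ r, hi < w r * θ 2) : ¬ IsRankedEquilibrium θ w β γ := by
  intro hE
  have hγpos : ∀ r, 0 < γ r := fun r => hlo.trans_le (hγlo r)
  have hwpos : ∀ r, 0 < w r := fun r =>
    pos_of_mul_pos_left ((hγpos 0).trans_le (hγhi 0) |>.trans (hw r)) (hθpos 2).le
  obtain ⟨r, hr, hρ⟩ := exists_bcbSlot_eq_none (θ := θ) (rb := rankVal β 1) (rg := rankVal γ 1)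
  obtain ⟨ρ, rfl⟩ : ∃ ρ : Fin 4, (ρ : ℕ) = r := ⟨⟨r, by omega⟩, rfl⟩
  obtain ⟨hcw, h0, h1, h2, D0, D1, D2⟩ :=
    hE.bcbSlot_removeNth_of_bcbSlot_eq_none hθ hθpos hlo h01 h12 hγlo hγhi hw hρ
  have hQ := bcbSlot_succAbove_of_bcbSlot_eq_none hρ
  have hc2 : 0 < ρ.removeNth β 2 := pos_of_mul_pos_right ((hγpos ρ).trans_le D2) (hθpos 0).le
  have aff2 : θ 0 * ρ.removeNth β 2 ≤ ρ.removeNth γ 2 := (bcbSlot_eq_some_iff.1 h2).2.1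
  obtain rfl | rfl | rfl | rfl : ρ = 0 ∨ ρ = 1 ∨ ρ = 2 ∨ ρ = 3 := by omega
  · exact hE.bcbSlot_ne_some_one hθpos (r := 2) hc2 (hwpos 2).le (hγpos 2).le (ρ' := 0)
      ((bcbSlot_zero_congr rfl rfl).trans hρ) ((bcbSlot_zero_congr rfl rfl).trans h0) aff2
      ((hQ 1).trans h1)
  · exact hE.bcbSlot_ne_some_one hθpos (r := 2) hc2 (hwpos 2).le (hγpos 2).le (ρ' := 1)
      ((bcbSlot_congr_of_le
        (fun m hm => by rcases (show m = 0 ∨ m = 1 by omega) with rfl | rfl <;> rfl)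
        fun m hm => by rcases (show m = 0 ∨ m = 1 by omega) with rfl | rfl <;> rfl).trans hρ)
      ((bcbSlot_zero_congr rfl rfl).trans h0) aff2 ((hQ 1).trans h1)
  · exact hE.bcbSlot_two_ne_none hθ hθpos hγpos hwpos hγ (hcw 1 0) h0 h1 h2 D0 D1 hρ
  · have h21 : (3 : Fin 4).removeNth β 2 < (3 : Fin 4).removeNth β 1 := by
      by_contra! h12'
      linarith [mul_le_mul_of_nonneg_left (aff2.trans (hγhi _)) (hθpos 1).le,
        mul_le_mul_of_nonneg_right ((hγlo 3).trans (D1.trans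
          (mul_le_mul_of_nonneg_left h12' (hθpos 1).le))) (hθpos 0).le]
    exact hE.bcbSlot_zero_ne_two hθ hθpos h21 (hcw 1 0) (bcbSlot_eq_some_iff.1 h1).2.1
      ((bcbSlot_eq_some_iff.1 h1).2.2 0
        (by rw [bcbAvail_succ_of_bcbSlot_eq_some h0, bcbAvail_zero]; decide)
        (by decide)) ((hQ 0).trans h0)

end FourBidders

/-- BCB with public budgets (budget-bids forced equal to the true budgets `B`): with three
slots of CTRs `θ 0 > θ 1 > θ 2 > 0`, four players of distinct budgets `B 0 > B 1 > B 2 > B 3`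
whose twelve values `B i / θ j` are pairwise distinct and chained as in the counterexample,
all valuations exceeding `B 0 / θ 2`, and ties resolved by budget order, no Nash
equilibrium in the value-bids exists. -/
theorem bcb_public_budgets_no_nash
    (θ : Fin 3 → ℝ) (B : Fin 4 → ℝ) (v : Fin 4 → ℝ)
    (hθpos : ∀ j, 0 < θ j) (hθ : StrictAnti θ)
    (hBpos : ∀ i, 0 < B i) (hB : StrictAnti B)
    -- the twelve values B i / θ j are ordered as in the counterexample:
    (hchain : B 3 / θ 0 < B 2 / θ 0 ∧ B 2 / θ 0 < B 1 / θ 0 ∧ B 1 / θ 0 < B 0 / θ 0 ∧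
      B 0 / θ 0 < B 3 / θ 1 ∧ B 3 / θ 1 < B 2 / θ 1 ∧ B 2 / θ 1 < B 1 / θ 1 ∧
      B 1 / θ 1 < B 0 / θ 1 ∧ B 0 / θ 1 < B 3 / θ 2 ∧ B 3 / θ 2 < B 2 / θ 2 ∧
      B 2 / θ 2 < B 1 / θ 2 ∧ B 1 / θ 2 < B 0 / θ 2)
    -- all valuations exceed B 0 / θ 2:
    (hv : ∀ i, B 0 / θ 2 < v i) :
    ¬ ∃ (b : Fin 4 → ℝ) (π : Equiv.Perm (Fin 4)),
      IsBidOrder b (fun i => (i : ℕ)) π ∧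
      ∀ (i : Fin 4) (b' : ℝ) (π' : Equiv.Perm (Fin 4)),
        IsBidOrder (Function.update b i b') (fun i => (i : ℕ)) π' →
        bcbUtil θ v B (Function.update b i b') B π' i ≤ bcbUtil θ v B b B π i := by
  rintro ⟨b, π, hNE⟩
  obtain ⟨-, -, -, h01, -, -, -, h12, -⟩ := hchain
  exact not_isRankedEquilibrium hθ hθpos (hBpos 3)
    ((div_lt_div_iff₀ (hθpos 0) (hθpos 1)).1 h01) ((div_lt_div_iff₀ (hθpos 1) (hθpos 2)).1 h12)
    (fun r => hB.antitone (Fin.le_last _)) (fun r => hB.antitone (Fin.zero_le _))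
    (hB.injective.comp π.injective) (fun r => (div_lt_iff₀ (hθpos 2)).1 (hv (π r)))
    (IsNashEq.isRankedEquilibrium hNE)
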